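/- Let h(I₁,I₂,I₃,I₄) = I₂⁵/5 + I₁³/3 − I₁²/2 + I₁I₂/2 − I₃²/2 − I₄ and let v = (0, v₂, 0, 0) with v₂ ≠ 0. Then any u ∈ ℝ⁴ satisfying (at the origin) h¹[u] = 0, h²[u,v] = 0, h²[u,u]·h⁴[v,v,v,v] = 3(h³[v,v,u])², and 15(h³[v,v,u])²h³[u,u,v] + h⁵[v,v,v,v,v](h²[u,u])² = 10 h⁴[v,v,v,u] h³[u,v,v] h²[u,u], must satisfy rank(u,v) < 2 (i.e., u and v are linearly dependent). -/

import Mathlib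

/-- The function `h(I) = I₂⁵/5 + I₁³/3 − I₁²/2 + I₁I₂/2 − I₃²/2 − I₄`. -/
noncomputable def h : (Fin 4 → ℝ) → ℝ :=
  fun I => (I 1) ^ 5 / 5 + (I 0) ^ 3 / 3 - (I 0) ^ 2 / 2
    + (I 0) * (I 1) / 2 - (I 2) ^ 2 / 2 - I 3

noncomputable def g1 (b x : Fin 4 → ℝ) : ℝ :=
  (x 1)^4 * b 1 + ((x 0)^2 - x 0 + x 1 / 2) * b 0 + x 0 * b 1 / 2 - x 2 * b 2 - b 3

noncomputable def g2 (a b x : Fin 4 → ℝ) : ℝ :=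
  4 * (x 1)^3 * a 1 * b 1 + (2 * (x 0) - 1) * a 0 * b 0 + a 0 * b 1 / 2
    + a 1 * b 0 / 2 - a 2 * b 2

noncomputable def g3 (a b c x : Fin 4 → ℝ) : ℝ :=
  12 * (x 1)^2 * a 1 * b 1 * c 1 + 2 * a 0 * b 0 * c 0

noncomputable def g4 (a b c d x : Fin 4 → ℝ) : ℝ :=
  24 * x 1 * a 1 * b 1 * c 1 * d 1

lemma contDiff_h : ContDiff ℝ (⊤ : ℕ∞) h := by unfold h; fun_prop (disch := norm_num)
lemma contDiff_g1 (b) : ContDiff ℝ (⊤ : ℕ∞) (g1 b) := by unfold g1; fun_prop (disch := norm_num)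
lemma contDiff_g2 (a b) : ContDiff ℝ (⊤ : ℕ∞) (g2 a b) := by unfold g2; fun_prop (disch := norm_num)
lemma contDiff_g3 (a b c) : ContDiff ℝ (⊤ : ℕ∞) (g3 a b c) := by unfold g3; fun_prop (disch := norm_num)
lemma contDiff_g4 (a b c d) : ContDiff ℝ (⊤ : ℕ∞) (g4 a b c d) := by unfold g4; fun_prop (disch := norm_num)

lemma line_hasDerivAt (x a : Fin 4 → ℝ) (i : Fin 4) :
    HasDerivAt (fun t : ℝ => x i + t * a i) (a i) 0 := by
  simpa using ((hasDerivAt_id (0:ℝ)).mul_const (a i)).const_add (x i)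

lemma fderiv_h (x a : Fin 4 → ℝ) : fderiv ℝ h x a = g1 a x := by
  rw [← (contDiff_h.differentiable (by simp) x).lineDeriv_eq_fderiv]
  unfold lineDeriv h
  simp only [Pi.add_apply, Pi.smul_apply, smul_eq_mul]
  have H := line_hasDerivAt x a
  have D := (((((((H 1).pow 5).div_const 5).add (((H 0).pow 3).div_const 3)).sub
      (((H 0).pow 2).div_const 2)).add (((H 0).mul (H 1)).div_const 2)).sub
      (((H 2).pow 2).div_const 2)).sub (H 3)
  erw [D.deriv]; unfold g1; ring

lemma fderiv_g1 (b x a : Fin 4 → ℝ) : fderiv ℝ (g1 b) x a = g2 a b x := by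
  rw [← ((contDiff_g1 b).differentiable (by simp) x).lineDeriv_eq_fderiv]
  unfold lineDeriv g1
  simp only [Pi.add_apply, Pi.smul_apply, smul_eq_mul]
  have H := line_hasDerivAt x a
  have D := (((((((H 1).pow 4).mul_const (b 1)).add
      (((((H 0).pow 2).sub (H 0)).add ((H 1).div_const 2)).mul_const (b 0))).add
      (((H 0).mul_const (b 1)).div_const 2)).sub ((H 2).mul_const (b 2))).sub_const (b 3))
  erw [D.deriv]; unfold g2; ring

lemma fderiv_g2 (a b x c : Fin 4 → ℝ) : fderiv ℝ (g2 a b) x c = g3 c a b x := by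
  rw [← ((contDiff_g2 a b).differentiable (by simp) x).lineDeriv_eq_fderiv]
  unfold lineDeriv g2
  simp only [Pi.add_apply, Pi.smul_apply, smul_eq_mul]
  have H := line_hasDerivAt x c
  have D := (((((((H 1).pow 3).const_mul 4).mul_const (a 1)).mul_const (b 1)).add
      (((((H 0).const_mul 2).sub_const 1).mul_const (a 0)).mul_const (b 0))).add_const
      (a 0 * b 1 / 2)).add_const (a 1 * b 0 / 2) |>.sub_const (a 2 * b 2)
  erw [D.deriv]; unfold g3; ring

lemma fderiv_g3 (a b c x d : Fin 4 → ℝ) : fderiv ℝ (g3 a b c) x d = g4 d a b c x := by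
  rw [← ((contDiff_g3 a b c).differentiable (by simp) x).lineDeriv_eq_fderiv]
  unfold lineDeriv g3
  simp only [Pi.add_apply, Pi.smul_apply, smul_eq_mul]
  have H := line_hasDerivAt x d
  have D := (((((H 1).pow 2).const_mul 12).mul_const (a 1)).mul_const (b 1)).mul_const
      (c 1) |>.add_const (2 * a 0 * b 0 * c 0)
  erw [D.deriv]; unfold g4; ring

lemma fderiv_g4 (a b c d x e : Fin 4 → ℝ) :
    fderiv ℝ (g4 a b c d) x e = 24 * e 1 * a 1 * b 1 * c 1 * d 1 := by
  rw [← ((contDiff_g4 a b c d).differentiable (by simp) x).lineDeriv_eq_fderiv]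
  unfold lineDeriv g4
  simp only [Pi.add_apply, Pi.smul_apply, smul_eq_mul]
  have H := line_hasDerivAt x e
  have D := ((((H 1).const_mul 24).mul_const (a 1)).mul_const (b 1)).mul_const
      (c 1) |>.mul_const (d 1)
  rw [D.deriv]

lemma itfd_succ {f : (Fin 4 → ℝ) → ℝ} (hf : ContDiff ℝ (⊤ : ℕ∞) f) {n : ℕ} (x : Fin 4 → ℝ)
    (m : Fin (n + 1) → (Fin 4 → ℝ)) :
    iteratedFDeriv ℝ (n + 1) f x m
      = iteratedFDeriv ℝ n (fun y => fderiv ℝ f y (m (Fin.last n))) x (Fin.init m) := by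
  rw [iteratedFDeriv_succ_apply_right]
  have hcomp : (fun y => fderiv ℝ f y (m (Fin.last n)))
      = (ContinuousLinearMap.apply ℝ ℝ (m (Fin.last n))) ∘ (fderiv ℝ f) := rfl
  rw [hcomp, ContinuousLinearMap.iteratedFDeriv_comp_left _ (hf.fderiv_right (mod_cast le_top)).contDiffAt le_rfl]
  simp

lemma itfd2 (a b : Fin 4 → ℝ) :
    iteratedFDeriv ℝ 2 h 0 ![a, b] = g2 a b 0 := by
  have e := itfd_succ contDiff_h (n := 1) 0 ![a, b]
  rw [show ((![a, b] : Fin 2 → _) (Fin.last 1)) = b from rfl,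
    show Fin.init ![a, b] = ![a] from by funext i; fin_cases i <;> rfl,
    show (fun y => fderiv ℝ h y b) = g1 b from funext fun y => fderiv_h y b] at e
  rw [e, iteratedFDeriv_one_apply, show (![a] : Fin 1 → _) 0 = a from rfl, fderiv_g1]

lemma itfd3 (a b c : Fin 4 → ℝ) :
    iteratedFDeriv ℝ 3 h 0 ![a, b, c] = g3 a b c 0 := by
  have e1 := itfd_succ contDiff_h (n := 2) 0 ![a, b, c]
  rw [show ((![a, b, c] : Fin 3 → _) (Fin.last 2)) = c from rfl,
    show Fin.init ![a, b, c] = ![a, b] from by funext i; fin_cases i <;> rfl,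
    show (fun y => fderiv ℝ h y c) = g1 c from funext fun y => fderiv_h y c] at e1
  have e2 := itfd_succ (contDiff_g1 c) (n := 1) 0 ![a, b]
  rw [show ((![a, b] : Fin 2 → _) (Fin.last 1)) = b from rfl,
    show Fin.init ![a, b] = ![a] from by funext i; fin_cases i <;> rfl,
    show (fun y => fderiv ℝ (g1 c) y b) = g2 b c from funext fun y => fderiv_g1 c y b] at e2
  rw [e1, e2, iteratedFDeriv_one_apply, show (![a] : Fin 1 → _) 0 = a from rfl, fderiv_g2]

lemma itfd5 (a b c d e : Fin 4 → ℝ) :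
    iteratedFDeriv ℝ 5 h 0 ![a, b, c, d, e]
      = 24 * a 1 * b 1 * c 1 * d 1 * e 1 := by
  have e1 := itfd_succ contDiff_h (n := 4) 0 ![a, b, c, d, e]
  rw [show ((![a, b, c, d, e] : Fin 5 → _) (Fin.last 4)) = e from rfl,
    show Fin.init ![a, b, c, d, e] = ![a, b, c, d] from by funext i; fin_cases i <;> rfl,
    show (fun y => fderiv ℝ h y e) = g1 e from funext fun y => fderiv_h y e] at e1
  have e2 := itfd_succ (contDiff_g1 e) (n := 3) 0 ![a, b, c, d]
  rw [show ((![a, b, c, d] : Fin 4 → _) (Fin.last 3)) = d from rfl,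
    show Fin.init ![a, b, c, d] = ![a, b, c] from by funext i; fin_cases i <;> rfl,
    show (fun y => fderiv ℝ (g1 e) y d) = g2 d e from funext fun y => fderiv_g1 e y d] at e2
  have e3 := itfd_succ (contDiff_g2 d e) (n := 2) 0 ![a, b, c]
  rw [show ((![a, b, c] : Fin 3 → _) (Fin.last 2)) = c from rfl,
    show Fin.init ![a, b, c] = ![a, b] from by funext i; fin_cases i <;> rfl,
    show (fun y => fderiv ℝ (g2 d e) y c) = g3 c d e from funext fun y => fderiv_g2 d e y c] at e3
  have e4 := itfd_succ (contDiff_g3 c d e) (n := 1) 0 ![a, b]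
  rw [show ((![a, b] : Fin 2 → _) (Fin.last 1)) = b from rfl,
    show Fin.init ![a, b] = ![a] from by funext i; fin_cases i <;> rfl,
    show (fun y => fderiv ℝ (g3 c d e) y b) = g4 b c d e from
      funext fun y => fderiv_g3 c d e y b] at e4
  rw [e1, e2, e3, e4, iteratedFDeriv_one_apply, show (![a] : Fin 1 → _) 0 = a from rfl,
    fderiv_g4]

/-- For `v = (0, v₂, 0, 0)` with `v₂ ≠ 0`, any `u` solving the system (4) of the
paper at the origin is linearly dependent with `v` (i.e. `rank(u,v) < 2`). -/
theorem rank_lt_two_of_system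
    (v₂ : ℝ) (hv₂ : v₂ ≠ 0) (v : Fin 4 → ℝ) (hv : v = ![0, v₂, 0, 0])
    (u : Fin 4 → ℝ)
    (h1 : fderiv ℝ h 0 u = 0)
    (h2 : iteratedFDeriv ℝ 2 h 0 ![u, v] = 0)
    (h3 : iteratedFDeriv ℝ 2 h 0 ![u, u] * iteratedFDeriv ℝ 4 h 0 ![v, v, v, v]
      = 3 * (iteratedFDeriv ℝ 3 h 0 ![v, v, u]) ^ 2)
    (h4 : 15 * (iteratedFDeriv ℝ 3 h 0 ![v, v, u]) ^ 2 * iteratedFDeriv ℝ 3 h 0 ![u, u, v]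
        + iteratedFDeriv ℝ 5 h 0 ![v, v, v, v, v] * (iteratedFDeriv ℝ 2 h 0 ![u, u]) ^ 2
      = 10 * iteratedFDeriv ℝ 4 h 0 ![v, v, v, u] * iteratedFDeriv ℝ 3 h 0 ![u, v, v]
          * iteratedFDeriv ℝ 2 h 0 ![u, u]) :
    ¬ LinearIndependent ℝ ![u, v] := by
  have hv0 : v 0 = 0 := by rw [hv]; rfl
  have hv1 : v 1 = v₂ := by rw [hv]; rfl
  have hv2 : v 2 = 0 := by rw [hv]; rfl
  -- u 3 = 0
  rw [fderiv_h] at h1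
  unfold g1 at h1
  simp only [Pi.zero_apply] at h1
  have hu3 : u 3 = 0 := by nlinarith [h1]
  -- u 0 = 0
  rw [itfd2] at h2
  unfold g2 at h2
  simp only [Pi.zero_apply, hv0, hv1, hv2] at h2
  have hu0 : u 0 = 0 := by
    have : u 0 * v₂ = 0 := by nlinarith [h2]
    rcases mul_eq_zero.mp this with h | h
    · exact h
    · exact absurd h hv₂
  -- u 2 = 0
  rw [itfd3, itfd3, itfd3, itfd2, itfd5] at h4
  unfold g2 g3 at h4
  simp only [Pi.zero_apply, hv0, hv1, hv2, hu0] at h4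
  have hu2 : u 2 = 0 := by
    by_contra hne
    have h5 : v₂ ^ 5 * u 2 ^ 4 ≠ 0 :=
      mul_ne_zero (pow_ne_zero _ hv₂) (pow_ne_zero _ hne)
    apply h5
    linear_combination h4 / 24
  have hv3 : v 3 = 0 := by rw [hv]; rfl
  -- conclude dependence
  intro hLI
  rw [linearIndependent_fin2] at hLI
  obtain ⟨-, hall⟩ := hLI
  apply hall (u 1 / v₂)
  show (u 1 / v₂) • (![u, v] 1) = ![u, v] 0
  simp only [Matrix.cons_val_one, Matrix.head_cons, Matrix.cons_val_zero]
  funext i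
  fin_cases i
  · show (u 1 / v₂) * v 0 = u 0
    rw [hv0, hu0]; ring
  · show (u 1 / v₂) * v 1 = u 1
    rw [hv1]; exact div_mul_cancel₀ _ hv₂
  · show (u 1 / v₂) * v 2 = u 2
    rw [hv2, hu2]; ring
  · show (u 1 / v₂) * v 3 = u 3
    rw [hv3, hu3]; ring
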